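/- Let $R \geq 1$, $p \in \mathbb{R}^2$, and let $u$ be a smooth solution of the graphical translator equation on $\overline{B_R(p)}$. Let $L$ denote the operator $Lv = \sum_{i,j=1}^2 a^{ij}D_iD_jv + D_2v$ with $a^{ij} = \delta^{ij} - \frac{D_iu\,D_ju}{1+|Du|^2}$. Let $\varphi$ be a smooth function on $\overline{B_R(p)}$ with $0 \leq \varphi \leq 1$, $R|D\varphi| \leq 2$ and $R^2|D^2\varphi| \leq 8$ everywhere, and set $G := \varphi^2\frac{|Du|^2}{2} + \frac{400}{R}\cdot\frac{u^2}{2}$. Then at every point of $B_R(p)$ one has $LG \geq \Big(\frac{400}{1+|Du|^2} - 200\Big)\frac{|Du|^2}{R} + \Big(\frac{1}{2} - \frac{5|Du|^2}{1+|Du|^2}\Big)\varphi^2|D^2u|^2$; in particular $LG \geq 0$ at every point where $|Du|^2 \leq 1/4$. -/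

import Mathlib

set_option maxHeartbeats 4000000

open Metric Real

noncomputable section

/-- The plane `ℝ²` with its Euclidean structure. -/
abbrev E2 : Type := EuclideanSpace ℝ (Fin 2)

/-- `i`-th partial derivative of `f : ℝ² → ℝ`. -/
def pd (i : Fin 2) (f : E2 → ℝ) (x : E2) : ℝ :=
  fderiv ℝ f x (EuclideanSpace.single i 1)

/-- `|Du|²`, the squared norm of the gradient. -/
def gradSq (u : E2 → ℝ) (x : E2) : ℝ := ∑ i, (pd i u x) ^ 2

/-- `|D²u|²`, the squared Frobenius norm of the Hessian. -/
def hessSq (u : E2 → ℝ) (x : E2) : ℝ := ∑ i, ∑ j, (pd i (pd j u) x) ^ 2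

/-- The graphical translator equation
`(1+|Du|²)Δu − ∑ᵢⱼ Dᵢu Dⱼu DᵢDⱼu + (1+|Du|²) D₂u = 0`. -/
def TranslatorEq (u : E2 → ℝ) (x : E2) : Prop :=
  (1 + gradSq u x) * (∑ i, pd i (pd i u) x)
    - (∑ i, ∑ j, pd i u x * pd j u x * pd i (pd j u) x)
    + (1 + gradSq u x) * pd 1 u x = 0

/-- The coefficients `aⁱʲ = δⁱʲ − DᵢuDⱼu/(1+|Du|²)`. -/
def acoef (u : E2 → ℝ) (i j : Fin 2) (x : E2) : ℝ :=
  (if i = j then 1 else 0) - pd i u x * pd j u x / (1 + gradSq u x)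

/-- The linearized operator `L v = ∑ᵢⱼ aⁱʲ DᵢDⱼv + D₂v`. -/
def Lop (u v : E2 → ℝ) (x : E2) : ℝ :=
  (∑ i, ∑ j, acoef u i j x * pd i (pd j v) x) + pd 1 v x

/-! ### Toolkit: calculus lemmas for `pd` -/

lemma pd_congr {f g : E2 → ℝ} {x : E2} (h : f =ᶠ[nhds x] g) (i : Fin 2) :
    pd i f x = pd i g x := by
  unfold pd; rw [h.fderiv_eq]

lemma pd_add {f g : E2 → ℝ} {x : E2} (hf : DifferentiableAt ℝ f x)
    (hg : DifferentiableAt ℝ g x) (i : Fin 2) :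
    pd i (fun y => f y + g y) x = pd i f x + pd i g x := by
  unfold pd; rw [fderiv_fun_add hf hg]; rfl

lemma pd_sub {f g : E2 → ℝ} {x : E2} (hf : DifferentiableAt ℝ f x)
    (hg : DifferentiableAt ℝ g x) (i : Fin 2) :
    pd i (fun y => f y - g y) x = pd i f x - pd i g x := by
  unfold pd; rw [fderiv_fun_sub hf hg]; rfl

lemma pd_mul {f g : E2 → ℝ} {x : E2} (hf : DifferentiableAt ℝ f x)
    (hg : DifferentiableAt ℝ g x) (i : Fin 2) :
    pd i (fun y => f y * g y) x = pd i f x * g x + f x * pd i g x := by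
  unfold pd; rw [fderiv_fun_mul hf hg]; simp [ContinuousLinearMap.add_apply]; ring

lemma pd_const (c : ℝ) (x : E2) (i : Fin 2) : pd i (fun _ => c) x = 0 := by
  unfold pd; rw [fderiv_fun_const]; rfl

lemma pd_const_add {f : E2 → ℝ} {x : E2} (hf : DifferentiableAt ℝ f x) (c : ℝ) (i : Fin 2) :
    pd i (fun y => c + f y) x = pd i f x := by
  unfold pd; rw [fderiv_const_add]

lemma pd_const_mul {f : E2 → ℝ} {x : E2} (hf : DifferentiableAt ℝ f x) (c : ℝ) (i : Fin 2) :
    pd i (fun y => c * f y) x = c * pd i f x := by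
  unfold pd; rw [fderiv_const_mul hf]; rfl

lemma pd_div_const {f : E2 → ℝ} {x : E2} (hf : DifferentiableAt ℝ f x) (c : ℝ) (i : Fin 2) :
    pd i (fun y => f y / c) x = pd i f x / c := by
  have h : (fun y => f y / c) = fun y => c⁻¹ * f y := by funext y; rw [div_eq_inv_mul]
  rw [h, pd_const_mul hf]; rw [div_eq_inv_mul]

lemma pd_sq {f : E2 → ℝ} {x : E2} (hf : DifferentiableAt ℝ f x) (i : Fin 2) :
    pd i (fun y => f y ^ 2) x = 2 * f x * pd i f x := by
  have h : (fun y => f y ^ 2) = fun y => f y * f y := by funext y; ring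
  rw [h, pd_mul hf hf]; ring

lemma pd_smoothOn {f : E2 → ℝ} {s : Set E2} (hs : IsOpen s) (hf : ContDiffOn ℝ (⊤ : ℕ∞) f s)
    (i : Fin 2) : ContDiffOn ℝ (⊤ : ℕ∞) (pd i f) s := by
  have h1 : ContDiffOn ℝ (⊤ : ℕ∞) (fderiv ℝ f) s := hf.fderiv_of_isOpen hs (by simp)
  exact h1.clm_apply contDiffOn_const

lemma pd_comm {f : E2 → ℝ} {s : Set E2} (hs : IsOpen s) (hf : ContDiffOn ℝ (⊤ : ℕ∞) f s)
    {x : E2} (hx : x ∈ s) (i j : Fin 2) : pd i (pd j f) x = pd j (pd i f) x := by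
  have hd : ∀ y ∈ s, DifferentiableAt ℝ f y := fun y hy =>
    (hf.contDiffAt (hs.mem_nhds hy)).differentiableAt (by simp)
  have hf' : ContDiffOn ℝ (⊤ : ℕ∞) (fderiv ℝ f) s := hf.fderiv_of_isOpen hs (by simp)
  have hd' : DifferentiableAt ℝ (fderiv ℝ f) x :=
    (hf'.contDiffAt (hs.mem_nhds hx)).differentiableAt (by simp)
  have sym := second_derivative_symmetric_of_eventually
    (f := f) (f' := fderiv ℝ f) (x := x)
    (Filter.eventually_of_mem (hs.mem_nhds hx) fun y hy => (hd y hy).hasFDerivAt)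
    hd'.hasFDerivAt
  have expand : ∀ (k l : Fin 2), pd k (pd l f) x
      = fderiv ℝ (fderiv ℝ f) x (EuclideanSpace.single k 1) (EuclideanSpace.single l 1) := by
    intro k l
    show fderiv ℝ (fun y => fderiv ℝ f y (EuclideanSpace.single l 1)) x _ = _
    rw [fderiv_clm_apply hd' (differentiableAt_const _)]
    simp
  rw [expand, expand, sym]

/-! ### The algebraic core -/

lemma absorb {a F f b v Hk : ℝ} (ha : a^2 ≤ 1) (hb : b^2 ≤ v*Hk) (hF : 0 ≤ F)
    (hHk : 0 ≤ Hk) (hv : 0 ≤ v) :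
    -((1/4)*F^2*Hk + 16*v*f^2) ≤ 4*F*(a*f*b) := by
  have hX2 : (4*F*(a*f*b))^2 ≤ 4*((1/4)*F^2*Hk)*(16*v*f^2) := by
    have h1 : a^2*b^2 ≤ b^2 := by nlinarith [sq_nonneg b]
    nlinarith [sq_nonneg (F*f), mul_nonneg (sq_nonneg (F*f)) (sq_nonneg (a*b)),
      mul_le_mul_of_nonneg_left hb (sq_nonneg (F*f)),
      mul_le_mul_of_nonneg_left h1 (sq_nonneg (F*f))]
  have hY : 0 ≤ (1/4)*F^2*Hk := by positivity
  have hZ : 0 ≤ 16*v*f^2 := by positivity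
  nlinarith [sq_nonneg ((1/4)*F^2*Hk - 16*v*f^2), sq_nonneg ((1/4)*F^2*Hk + 16*v*f^2 + 4*F*(a*f*b))]


lemma absorb2 {a g B : ℝ} (ha1 : -1 ≤ a) (ha2 : a ≤ 1) (hB : 0 ≤ B) (hg : g^2 ≤ B^2) :
    -B ≤ a*g := by
  nlinarith only [mul_nonneg (by linarith : (0:ℝ) ≤ 1 - a) (by nlinarith only [hg, hB] : 0 ≤ B - g),
    mul_nonneg (by linarith : (0:ℝ) ≤ 1 + a) (by nlinarith only [hg, hB] : 0 ≤ B + g)]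

/-- The core algebraic inequality, with all derivative values abstracted as reals. -/
lemma key_ineq (R U u0 u1 q00 q01 q11 c000 c001 c011 c111 F f0 f1 g00 g01 g11 LG : ℝ)
    (hR : 1 ≤ R)
    (hF0 : 0 ≤ F) (hF1 : F ≤ 1)
    (hf : f0^2 + f1^2 ≤ 4/R^2)
    (hg : g00^2 + 2*g01^2 + g11^2 ≤ 64/R^4)
    (heq : (1+(u0^2+u1^2))*(q00+q11)
      - (u0*u0*q00 + 2*(u0*u1*q01) + u1*u1*q11) + (1+(u0^2+u1^2))*u1 = 0)
    (hdeq0 : 2*(u0*q00+u1*q01)*(q00+q11) + (1+(u0^2+u1^2))*(c000+c011)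
      - (2*(q00*(u0*q00+u1*q01) + q01*(u0*q01+u1*q11))
          + (u0*u0*c000 + 2*(u0*u1*c001) + u1*u1*c011))
      + 2*(u0*q00+u1*q01)*u1 + (1+(u0^2+u1^2))*q01 = 0)
    (hdeq1 : 2*(u0*q01+u1*q11)*(q00+q11) + (1+(u0^2+u1^2))*(c001+c111)
      - (2*(q01*(u0*q00+u1*q01) + q11*(u0*q01+u1*q11))
          + (u0*u0*c001 + 2*(u0*u1*c011) + u1*u1*c111))
      + 2*(u0*q01+u1*q11)*u1 + (1+(u0^2+u1^2))*q11 = 0)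
    (hLG : LG =
      (1 - u0*u0/(1+(u0^2+u1^2))) *
        (2*F*f0*(u0*q00+u1*q01) + F^2*(q00*q00 + q01*q01 + u0*c000 + u1*c001)
          + (f0*f0 + F*g00)*(u0^2+u1^2) + 2*F*f0*(u0*q00+u1*q01)
          + (400/R)*(u0*u0 + U*q00))
      + 2*((0 - u0*u1/(1+(u0^2+u1^2))) *
        (2*F*f0*(u0*q01+u1*q11) + F^2*(q01*q00 + q11*q01 + u0*c001 + u1*c011)
          + (f0*f1 + F*g01)*(u0^2+u1^2) + 2*F*f1*(u0*q00+u1*q01)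
          + (400/R)*(u0*u1 + U*q01)))
      + (1 - u1*u1/(1+(u0^2+u1^2))) *
        (2*F*f1*(u0*q01+u1*q11) + F^2*(q01*q01 + q11*q11 + u0*c011 + u1*c111)
          + (f1*f1 + F*g11)*(u0^2+u1^2) + 2*F*f1*(u0*q01+u1*q11)
          + (400/R)*(u1*u1 + U*q11))
      + (F^2*(u0*q01 + u1*q11) + F*f1*(u0^2+u1^2) + (400/R)*(U*u1))) :
    LG ≥ (400/(1+(u0^2+u1^2)) - 200) * (u0^2+u1^2) / R
        + (1/2 - 5*(u0^2+u1^2)/(1+(u0^2+u1^2))) * F^2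
            * ((q00^2+q01^2) + (q01^2+q11^2))
      ∧ ((u0^2+u1^2) ≤ 1/4 → 0 ≤ LG) := by
  have hR0 : (0:ℝ) < R := by linarith
  have hD0 : (0:ℝ) < 1+(u0^2+u1^2) := by positivity
  obtain ⟨E, hE⟩ : ∃ E : ℝ, E = (1+(u0^2+u1^2))⁻¹ := ⟨_, rfl⟩
  obtain ⟨r, hr⟩ : ∃ r : ℝ, r = R⁻¹ := ⟨_, rfl⟩
  have hED : (1+(u0^2+u1^2))*E = 1 := by rw [hE]; field_simp
  have hRr : R*r = 1 := by rw [hr]; field_simp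
  have hr0 : 0 < r := by rw [hr]; positivity
  have hr1 : r ≤ 1 := by nlinarith only [hRr, hr0, hR]
  have hE0 : 0 < E := by rw [hE]; positivity
  have hEsum : E + (u0^2+u1^2)*E = 1 := by linear_combination hED
  have hvnn : (0:ℝ) ≤ u0^2+u1^2 := by positivity
  have hvEnn : 0 ≤ (u0^2+u1^2)*E := mul_nonneg hvnn hE0.le
  have hvE : (u0^2+u1^2)*E ≤ 1 := by linarith only [hEsum, hE0]
  have hE1 : E ≤ 1 := by linarith only [hEsum, hvEnn]
  -- rewrite LG in E, r form
  have hLG' : LG =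
      (1 - u0*u0*E) *
        (2*F*f0*(u0*q00+u1*q01) + F^2*(q00*q00 + q01*q01 + u0*c000 + u1*c001)
          + (f0*f0 + F*g00)*(u0^2+u1^2) + 2*F*f0*(u0*q00+u1*q01)
          + (400*r)*(u0*u0 + U*q00))
      + 2*((-(u0*u1*E)) *
        (2*F*f0*(u0*q01+u1*q11) + F^2*(q01*q00 + q11*q01 + u0*c001 + u1*c011)
          + (f0*f1 + F*g01)*(u0^2+u1^2) + 2*F*f1*(u0*q00+u1*q01)
          + (400*r)*(u0*u1 + U*q01)))
      + (1 - u1*u1*E) *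
        (2*F*f1*(u0*q01+u1*q11) + F^2*(q01*q01 + q11*q11 + u0*c011 + u1*c111)
          + (f1*f1 + F*g11)*(u0^2+u1^2) + 2*F*f1*(u0*q01+u1*q11)
          + (400*r)*(u1*u1 + U*q11))
      + (F^2*(u0*q01 + u1*q11) + F*f1*(u0^2+u1^2) + (400*r)*(U*u1)) := by
    rw [hLG, hE, hr]; ring
  -- structural identities
  have id1 : (1 - u0*u0*E)*(u0*u0) + 2*((-(u0*u1*E))*(u0*u1)) + (1 - u1*u1*E)*(u1*u1) = (u0^2+u1^2)*E := by
    linear_combination (-(u0^2+u1^2))*hED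
  have id2 : (1 - u0*u0*E)*q00 + 2*((-(u0*u1*E))*q01) + (1 - u1*u1*E)*q11 + u1 = 0 := by
    linear_combination E*heq - (q00+q11+u1)*hED
  have id30 : (1 - u0*u0*E)*c000 + 2*((-(u0*u1*E))*c001) + (1 - u1*u1*E)*c011
      = 2*E*(q00*(u0*q00+u1*q01)+q01*(u0*q01+u1*q11)) - 2*E^2*(u0*q00+u1*q01)*(u0*(u0*q00+u1*q01)+u1*(u0*q01+u1*q11)) - q01 := by
    linear_combination E*hdeq0 - (2*E^2*(u0*q00+u1*q01))*heq
      - (c000+c011+q01 - 2*E*(u0*q00+u1*q01)*(q00+q11+u1))*hED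
  have id31 : (1 - u0*u0*E)*c001 + 2*((-(u0*u1*E))*c011) + (1 - u1*u1*E)*c111
      = 2*E*(q01*(u0*q00+u1*q01)+q11*(u0*q01+u1*q11)) - 2*E^2*(u0*q01+u1*q11)*(u0*(u0*q00+u1*q01)+u1*(u0*q01+u1*q11)) - q11 := by
    linear_combination E*hdeq1 - (2*E^2*(u0*q01+u1*q11))*heq
      - (c001+c111+q11 - 2*E*(u0*q01+u1*q11)*(q00+q11+u1))*hED
  have hLG2 : LG = 400*((u0^2+u1^2)*E)*r
      + F^2*((q00^2+2*q01^2+q11^2) - ((u0*q00+u1*q01)^2+(u0*q01+u1*q11)^2)*E + 2*E*(((u0*q00+u1*q01)^2+(u0*q01+u1*q11)^2) - (u0*(u0*q00+u1*q01)+u1*(u0*q01+u1*q11))^2*E))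
      + (u0^2+u1^2)*((1 - u0*u0*E)*f0^2 + 2*((-(u0*u1*E))*(f0*f1)) + (1 - u1*u1*E)*f1^2 + F*((1 - u0*u0*E)*g00 + 2*((-(u0*u1*E))*g01) + (1 - u1*u1*E)*g11) + F*f1) + (4*F*((1 - u0*u0*E)*(f0*(u0*q00+u1*q01))) + 4*F*((-(u0*u1*E))*(f0*(u0*q01+u1*q11))) + 4*F*((-(u0*u1*E))*(f1*(u0*q00+u1*q01))) + 4*F*((1 - u1*u1*E)*(f1*(u0*q01+u1*q11)))) := by
    rw [hLG']
    linear_combination (400*r)*id1 + (400*r*U)*id2 + (F^2*u0)*id30 + (F^2*u1)*id31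
  -- basic bounds
  have hSH0 : (u0*q00+u1*q01)^2 ≤ (u0^2+u1^2)*(q00^2+q01^2) := by nlinarith only [sq_nonneg (u0*q01 - u1*q00)]
  have hSH1 : (u0*q01+u1*q11)^2 ≤ (u0^2+u1^2)*(q01^2+q11^2) := by nlinarith only [sq_nonneg (u0*q11 - u1*q01)]
  have hTS : (u0*(u0*q00+u1*q01)+u1*(u0*q01+u1*q11))^2 ≤ (u0^2+u1^2)*((u0*q00+u1*q01)^2+(u0*q01+u1*q11)^2) := by nlinarith only [sq_nonneg (u0*(u0*q01+u1*q11) - u1*(u0*q00+u1*q01))]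
  have hSnn : (0:ℝ) ≤ ((u0*q00+u1*q01)^2+(u0*q01+u1*q11)^2) := by positivity
  have hHnn : (0:ℝ) ≤ (q00^2+2*q01^2+q11^2) := by positivity
  have hs1 : 0 ≤ ((u0*q00+u1*q01)^2+(u0*q01+u1*q11)^2) - E*(u0*(u0*q00+u1*q01)+u1*(u0*q01+u1*q11))^2 := by
    nlinarith only [mul_le_mul_of_nonneg_left hTS hE0.le,
      mul_le_mul_of_nonneg_right hvE hSnn]
  have hs2 : 0 ≤ (u0^2+u1^2)*(q00^2+2*q01^2+q11^2) - ((u0*q00+u1*q01)^2+(u0*q01+u1*q11)^2) := by nlinarith only [hSH0, hSH1]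
  have h1 : (1 - (u0^2+u1^2)*E)*F^2*(q00^2+2*q01^2+q11^2) ≤ F^2*((q00^2+2*q01^2+q11^2) - ((u0*q00+u1*q01)^2+(u0*q01+u1*q11)^2)*E + 2*E*(((u0*q00+u1*q01)^2+(u0*q01+u1*q11)^2) - (u0*(u0*q00+u1*q01)+u1*(u0*q01+u1*q11))^2*E)) := by
    nlinarith only [mul_nonneg (mul_nonneg (sq_nonneg F) hE0.le)
      (by linarith only [hs1, hs2] : 0 ≤ ((u0^2+u1^2)*(q00^2+2*q01^2+q11^2) - ((u0*q00+u1*q01)^2+(u0*q01+u1*q11)^2)) + 2*(((u0*q00+u1*q01)^2+(u0*q01+u1*q11)^2) - E*(u0*(u0*q00+u1*q01)+u1*(u0*q01+u1*q11))^2))]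
  -- φ-derivative bounds
  have hfr : f0^2 + f1^2 ≤ 4*r^2 := by
    have h4 : (4:ℝ)/R^2 = 4*r^2 := by rw [hr]; ring
    linarith only [hf, h4.ge, h4.le]
  have hgr : g00^2 + 2*g01^2 + g11^2 ≤ 64*r^4 := by
    have h4 : (64:ℝ)/R^4 = 64*r^4 := by rw [hr]; ring
    linarith only [hg, h4.ge, h4.le]
  have hrsq : r^2 ≤ r := by nlinarith only [hr0, hr1]
  -- coefficient bounds
  have ha00l : 0 ≤ 1 - u0*u0*E := by
    nlinarith only [hvE, mul_nonneg (sq_nonneg u1) hE0.le]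
  have ha00u : 1 - u0*u0*E ≤ 1 := by nlinarith only [mul_nonneg (sq_nonneg u0) hE0.le]
  have ha11l : 0 ≤ 1 - u1*u1*E := by
    nlinarith only [hvE, mul_nonneg (sq_nonneg u0) hE0.le]
  have ha11u : 1 - u1*u1*E ≤ 1 := by nlinarith only [mul_nonneg (sq_nonneg u1) hE0.le]
  have ha01a : 2*(u0*u1*E) ≤ 1 := by
    nlinarith only [hvE, mul_nonneg (sq_nonneg (u0-u1)) hE0.le]
  have ha01b : -1 ≤ 2*(u0*u1*E) := by
    nlinarith only [hvE, mul_nonneg (sq_nonneg (u0+u1)) hE0.le]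
  have ha00sq : (1 - u0*u0*E)^2 ≤ 1 := by nlinarith only [ha00l, ha00u]
  have ha11sq : (1 - u1*u1*E)^2 ≤ 1 := by nlinarith only [ha11l, ha11u]
  have ha01sq : (-(u0*u1*E))^2 ≤ 1 := by nlinarith only [ha01a, ha01b]
  -- bound on Bp
  have hp1 : -(4*r^2) ≤ (1 - u0*u0*E)*f0^2 + 2*((-(u0*u1*E))*(f0*f1)) + (1 - u1*u1*E)*f1^2 := by
    nlinarith only [ha01a, ha01b, sq_nonneg (f0-f1), sq_nonneg (f0+f1), hfr,
      mul_nonneg ha00l (sq_nonneg f0), mul_nonneg ha11l (sq_nonneg f1)]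
  have hg00 : g00^2 ≤ (8*r^2)^2 := by nlinarith only [hgr, sq_nonneg g01, sq_nonneg g11, sq_nonneg (r^2)]
  have hg01 : g01^2 ≤ (8*r^2)^2 := by nlinarith only [hgr, sq_nonneg g00, sq_nonneg g11, sq_nonneg (r^2)]
  have hg11 : g11^2 ≤ (8*r^2)^2 := by nlinarith only [hgr, sq_nonneg g00, sq_nonneg g01, sq_nonneg (r^2)]
  have hrq : (0:ℝ) ≤ 8*r^2 := by positivity
  have e1 : -(8*r^2) ≤ (1 - u0*u0*E)*g00 := absorb2 (by linarith only [ha00l]) ha00u hrq hg00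
  have e2 : -(8*r^2) ≤ (-(u0*u1*E))*g01 := absorb2 (by linarith only [ha01a]) (by linarith only [ha01b]) hrq hg01
  have e3 : -(8*r^2) ≤ (1 - u1*u1*E)*g11 := absorb2 (by linarith only [ha11l]) ha11u hrq hg11
  have hp2 : -(32*r^2) ≤ F*((1 - u0*u0*E)*g00 + 2*((-(u0*u1*E))*g01) + (1 - u1*u1*E)*g11) := by
    have hX : -(32*r^2) ≤ (1 - u0*u0*E)*g00 + 2*((-(u0*u1*E))*g01) + (1 - u1*u1*E)*g11 := by linarith only [e1, e2, e3]
    nlinarith only [mul_nonneg hF0 (by linarith only [hX] :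
      0 ≤ (1 - u0*u0*E)*g00 + 2*((-(u0*u1*E))*g01) + (1 - u1*u1*E)*g11 + 32*r^2), hF1, sq_nonneg r, hX, hF0]
  have hf1b : f1^2 ≤ (2*r)^2 := by nlinarith only [hfr, sq_nonneg f0]
  have hp3 : -(2*r) ≤ F*f1 := absorb2 (by linarith only [hF0]) hF1 (by positivity) hf1b
  have hBp : -(38*r) ≤ ((1 - u0*u0*E)*f0^2 + 2*((-(u0*u1*E))*(f0*f1)) + (1 - u1*u1*E)*f1^2 + F*((1 - u0*u0*E)*g00 + 2*((-(u0*u1*E))*g01) + (1 - u1*u1*E)*g11) + F*f1) := by nlinarith only [hp1, hp2, hp3, hrsq]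
  have hvnn' : (0:ℝ) ≤ (u0^2+u1^2) := by positivity
  have hvBp : -(38*((u0^2+u1^2)*r)) ≤ (u0^2+u1^2)*((1 - u0*u0*E)*f0^2 + 2*((-(u0*u1*E))*(f0*f1)) + (1 - u1*u1*E)*f1^2 + F*((1 - u0*u0*E)*g00 + 2*((-(u0*u1*E))*g01) + (1 - u1*u1*E)*g11) + F*f1) := by
    nlinarith only [mul_le_mul_of_nonneg_left hBp hvnn']
  -- bound on Cp
  have t1 := absorb ha00sq hSH0 hF0 (by positivity : (0:ℝ) ≤ q00^2+q01^2) hvnn' (f := f0)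
  have t2 := absorb ha01sq hSH1 hF0 (by positivity : (0:ℝ) ≤ q01^2+q11^2) hvnn' (f := f0)
  have t3 := absorb ha01sq hSH0 hF0 (by positivity : (0:ℝ) ≤ q00^2+q01^2) hvnn' (f := f1)
  have t4 := absorb ha11sq hSH1 hF0 (by positivity : (0:ℝ) ≤ q01^2+q11^2) hvnn' (f := f1)
  have hCp : -((1/2)*F^2*(q00^2+2*q01^2+q11^2) + 32*(u0^2+u1^2)*(f0^2+f1^2)) ≤ (4*F*((1 - u0*u0*E)*(f0*(u0*q00+u1*q01))) + 4*F*((-(u0*u1*E))*(f0*(u0*q01+u1*q11))) + 4*F*((-(u0*u1*E))*(f1*(u0*q00+u1*q01))) + 4*F*((1 - u1*u1*E)*(f1*(u0*q01+u1*q11)))) := by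
    nlinarith only [t1, t2, t3, t4]
  have hCp2 : -((1/2)*F^2*(q00^2+2*q01^2+q11^2) + 128*((u0^2+u1^2)*r)) ≤ (4*F*((1 - u0*u0*E)*(f0*(u0*q00+u1*q01))) + 4*F*((-(u0*u1*E))*(f0*(u0*q01+u1*q11))) + 4*F*((-(u0*u1*E))*(f1*(u0*q00+u1*q01))) + 4*F*((1 - u1*u1*E)*(f1*(u0*q01+u1*q11)))) := by
    nlinarith only [hCp, mul_le_mul_of_nonneg_left hfr hvnn',
      mul_le_mul_of_nonneg_left hrsq hvnn']
  -- main intermediate bound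
  have main : 400*((u0^2+u1^2)*E)*r + (1/2 - (u0^2+u1^2)*E)*F^2*(q00^2+2*q01^2+q11^2) - 166*((u0^2+u1^2)*r) ≤ LG := by
    rw [hLG2]; nlinarith only [h1, hvBp, hCp2]
  constructor
  · have hconv : (400/(1+(u0^2+u1^2)) - 200) * (u0^2+u1^2) / R
        + (1/2 - 5*(u0^2+u1^2)/(1+(u0^2+u1^2))) * F^2 * ((q00^2+q01^2) + (q01^2+q11^2))
        = (400*E - 200)*((u0^2+u1^2)*r) + (1/2 - 5*((u0^2+u1^2)*E))*F^2*(q00^2+2*q01^2+q11^2) := by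
      rw [hE, hr]; ring
    rw [ge_iff_le, hconv]
    nlinarith only [main, mul_nonneg hvnn' hr0.le,
      mul_nonneg (mul_nonneg (mul_nonneg hvnn' hE0.le) (sq_nonneg F)) hHnn]
  · intro hv4
    have hE45 : 4/5 ≤ E := by nlinarith only [hED, hE0, hv4]
    have hvE4 : (u0^2+u1^2)*E ≤ 1/4 := by nlinarith only [hv4, hE1, hE0, hvnn']
    have X1 : 0 ≤ (400*E - 166)*((u0^2+u1^2)*r) := by
      apply mul_nonneg (by linarith only [hE45]) (mul_nonneg hvnn' hr0.le)
    have X2 : 0 ≤ (1/2 - (u0^2+u1^2)*E)*(F^2*(q00^2+2*q01^2+q11^2)) := by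
      apply mul_nonneg (by linarith only [hvE4]) (by positivity)
    nlinarith only [main, X1, X2]

/-- With `G = φ²|Du|²/2 + (400/R)u²/2` one has
`LG ≥ (400/(1+|Du|²) − 200)|Du|²/R + (1/2 − 5|Du|²/(1+|Du|²))φ²|D²u|²` in `B_R(p)`,
and in particular `LG ≥ 0` wherever `|Du|² ≤ 1/4`. -/
theorem L_auxiliary_quantity (R : ℝ) (hR : 1 ≤ R) (p : E2) (u φ : E2 → ℝ)
    (hu : ContDiffOn ℝ (⊤ : ℕ∞) u (closedBall p R))
    (heq : ∀ x ∈ closedBall p R, TranslatorEq u x)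
    (hφ : ContDiffOn ℝ (⊤ : ℕ∞) φ (closedBall p R))
    (hφ0 : ∀ x ∈ closedBall p R, 0 ≤ φ x ∧ φ x ≤ 1)
    (hφ1 : ∀ x ∈ closedBall p R, R * Real.sqrt (gradSq φ x) ≤ 2)
    (hφ2 : ∀ x ∈ closedBall p R, R ^ 2 * Real.sqrt (hessSq φ x) ≤ 8) :
    ∀ x ∈ ball p R,
      Lop u (fun y => φ y ^ 2 * (gradSq u y / 2) + (400 / R) * (u y ^ 2 / 2)) x ≥
          (400 / (1 + gradSq u x) - 200) * gradSq u x / R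
            + (1 / 2 - 5 * gradSq u x / (1 + gradSq u x)) * φ x ^ 2 * hessSq u x
        ∧ (gradSq u x ≤ 1 / 4 →
            0 ≤ Lop u (fun y => φ y ^ 2 * (gradSq u y / 2) + (400 / R) * (u y ^ 2 / 2)) x) := by
  intro x hx
  have hR0 : (0:ℝ) < R := by linarith
  have hxc : x ∈ closedBall p R := ball_subset_closedBall hx
  have hso : IsOpen (ball p R) := isOpen_ball
  have hus : ContDiffOn ℝ (⊤ : ℕ∞) u (ball p R) := hu.mono ball_subset_closedBall
  have hps : ContDiffOn ℝ (⊤ : ℕ∞) φ (ball p R) := hφ.mono ball_subset_closedBall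
  have hu1 : ∀ i : Fin 2, ContDiffOn ℝ (⊤ : ℕ∞) (pd i u) (ball p R) := fun i => pd_smoothOn hso hus i
  have hu2 : ∀ i j : Fin 2, ContDiffOn ℝ (⊤ : ℕ∞) (pd i (pd j u)) (ball p R) :=
    fun i j => pd_smoothOn hso (hu1 j) i
  have hp1 : ∀ i : Fin 2, ContDiffOn ℝ (⊤ : ℕ∞) (pd i φ) (ball p R) := fun i => pd_smoothOn hso hps i
  have dA : ∀ f : E2 → ℝ, ContDiffOn ℝ (⊤ : ℕ∞) f (ball p R) → ∀ y ∈ ball p R,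
      DifferentiableAt ℝ f y :=
    fun f hf y hy => (hf.contDiffAt (hso.mem_nhds hy)).differentiableAt (by simp)
  have hgr_fun : gradSq u = fun y => pd 0 u y ^ 2 + pd 1 u y ^ 2 :=
    funext fun y => by simp [gradSq, Fin.sum_univ_two]
  have hvs : ContDiffOn ℝ (⊤ : ℕ∞) (gradSq u) (ball p R) := by
    rw [hgr_fun]; exact ((hu1 0).pow 2).add ((hu1 1).pow 2)
  -- first derivatives of |Du|²
  have d1 : ∀ k : Fin 2, ∀ y ∈ ball p R, pd k (gradSq u) y
      = 2 * pd 0 u y * pd k (pd 0 u) y + 2 * pd 1 u y * pd k (pd 1 u) y := by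
    intro k y hy
    have h0 := dA _ (hu1 0) y hy; have h1 := dA _ (hu1 1) y hy
    rw [hgr_fun]
    simp (disch := fun_prop) only [pd_add, pd_sq, pd_const]
    try ring
  -- second derivatives of |Du|²
  have d2 : ∀ j k : Fin 2, pd j (pd k (gradSq u)) x
      = 2 * pd j (pd 0 u) x * pd k (pd 0 u) x + 2 * pd 0 u x * pd j (pd k (pd 0 u)) x
        + 2 * pd j (pd 1 u) x * pd k (pd 1 u) x + 2 * pd 1 u x * pd j (pd k (pd 1 u)) x := by
    intro j k
    have hev : pd k (gradSq u) =ᶠ[nhds x]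
        fun y => 2 * pd 0 u y * pd k (pd 0 u) y + 2 * pd 1 u y * pd k (pd 1 u) y :=
      Filter.eventuallyEq_of_mem (hso.mem_nhds hx) (fun y hy => d1 k y hy)
    rw [pd_congr hev j]
    have h0 := dA _ (hu1 0) x hx; have h1 := dA _ (hu1 1) x hx
    have h2 := dA _ (hu2 k 0) x hx; have h3 := dA _ (hu2 k 1) x hx
    simp (disch := fun_prop) only [pd_add, pd_mul, pd_const_mul, pd_const]
    try ring
  -- first derivatives of G
  have dG1 : ∀ k : Fin 2, ∀ y ∈ ball p R,
      pd k (fun y => φ y ^ 2 * (gradSq u y / 2) + 400 / R * (u y ^ 2 / 2)) y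
      = 2 * φ y * pd k φ y * ((pd 0 u y ^ 2 + pd 1 u y ^ 2) / 2)
        + φ y ^ 2 * ((2 * pd 0 u y * pd k (pd 0 u) y + 2 * pd 1 u y * pd k (pd 1 u) y) / 2)
        + 400 / R * (u y * pd k u y) := by
    intro k y hy
    have h0 := dA _ (hu1 0) y hy; have h1 := dA _ (hu1 1) y hy
    have h2 := dA _ hus y hy; have h3 := dA _ hps y hy
    simp only [hgr_fun]
    simp (disch := fun_prop) only [pd_add, pd_mul, pd_sq, pd_const_mul, pd_div_const, pd_const]
    try ring
  -- second derivatives of G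
  have dG2 : ∀ j k : Fin 2, pd j (pd k (fun y => φ y ^ 2 * (gradSq u y / 2) + 400 / R * (u y ^ 2 / 2))) x
      = 2 * pd j φ x * pd k φ x * ((pd 0 u x ^ 2 + pd 1 u x ^ 2) / 2)
        + 2 * φ x * pd j (pd k φ) x * ((pd 0 u x ^ 2 + pd 1 u x ^ 2) / 2)
        + 2 * φ x * pd k φ x
            * ((2 * pd 0 u x * pd j (pd 0 u) x + 2 * pd 1 u x * pd j (pd 1 u) x) / 2)
        + 2 * φ x * pd j φ x
            * ((2 * pd 0 u x * pd k (pd 0 u) x + 2 * pd 1 u x * pd k (pd 1 u) x) / 2)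
        + φ x ^ 2 * ((2 * pd j (pd 0 u) x * pd k (pd 0 u) x
            + 2 * pd 0 u x * pd j (pd k (pd 0 u)) x
            + 2 * pd j (pd 1 u) x * pd k (pd 1 u) x
            + 2 * pd 1 u x * pd j (pd k (pd 1 u)) x) / 2)
        + 400 / R * (pd j u x * pd k u x + u x * pd j (pd k u) x) := by
    intro j k
    have hev : pd k (fun y => φ y ^ 2 * (gradSq u y / 2) + 400 / R * (u y ^ 2 / 2)) =ᶠ[nhds x]
        fun y => 2 * φ y * pd k φ y * ((pd 0 u y ^ 2 + pd 1 u y ^ 2) / 2)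
          + φ y ^ 2 * ((2 * pd 0 u y * pd k (pd 0 u) y + 2 * pd 1 u y * pd k (pd 1 u) y) / 2)
          + 400 / R * (u y * pd k u y) :=
      Filter.eventuallyEq_of_mem (hso.mem_nhds hx) (fun y hy => dG1 k y hy)
    rw [pd_congr hev j]
    have h0 := dA _ (hu1 0) x hx; have h1 := dA _ (hu1 1) x hx
    have h2 := dA _ (hu2 k 0) x hx; have h3 := dA _ (hu2 k 1) x hx
    have h4 := dA _ hus x hx; have h5 := dA _ hps x hx
    have h6 := dA _ (hu1 k) x hx; have h7 := dA _ (hp1 k) x hx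
    have h8 := dA _ hvs x hx
    simp (disch := fun_prop) only [pd_add, pd_mul, pd_sq, pd_const_mul, pd_div_const, pd_const]
    try ring
  -- symmetry facts
  have hq10 : pd 1 (pd 0 u) x = pd 0 (pd 1 u) x := pd_comm hso hus hx 1 0
  have hgp10 : pd 1 (pd 0 φ) x = pd 0 (pd 1 φ) x := pd_comm hso hps hx 1 0
  have h3a : ∀ m : Fin 2, ∀ y ∈ ball p R,
      pd 1 (pd 0 (pd m u)) y = pd 0 (pd 1 (pd m u)) y :=
    fun m y hy => pd_comm hso (hu1 m) hy 1 0
  have hq10fun : ∀ y ∈ ball p R, pd 1 (pd 0 u) y = pd 0 (pd 1 u) y :=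
    fun y hy => pd_comm hso hus hy 1 0
  have h3b : ∀ j : Fin 2, pd j (pd 1 (pd 0 u)) x = pd j (pd 0 (pd 1 u)) x := by
    intro j
    exact pd_congr (Filter.eventuallyEq_of_mem (hso.mem_nhds hx) hq10fun) j
  have e010 : pd 0 (pd 1 (pd 0 u)) x = pd 0 (pd 0 (pd 1 u)) x := h3b 0
  have e100 : pd 1 (pd 0 (pd 0 u)) x = pd 0 (pd 0 (pd 1 u)) x := by
    rw [h3a 0 x hx, e010]
  have e110 : pd 1 (pd 1 (pd 0 u)) x = pd 0 (pd 1 (pd 1 u)) x := by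
    rw [h3b 1, h3a 1 x hx]
  have e101 : pd 1 (pd 0 (pd 1 u)) x = pd 0 (pd 1 (pd 1 u)) x := h3a 1 x hx
  have hgx : gradSq u x = pd 0 u x ^ 2 + pd 1 u x ^ 2 := by
    simp [gradSq, Fin.sum_univ_two]
  -- the translator equation on the ball, in explicit form
  have hTE : ∀ y ∈ ball p R,
      (1 + (pd 0 u y ^ 2 + pd 1 u y ^ 2)) * (pd 0 (pd 0 u) y + pd 1 (pd 1 u) y)
        - (pd 0 u y * pd 0 u y * pd 0 (pd 0 u) y + pd 0 u y * pd 1 u y * pd 0 (pd 1 u) y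
            + pd 1 u y * pd 0 u y * pd 1 (pd 0 u) y + pd 1 u y * pd 1 u y * pd 1 (pd 1 u) y)
        + (1 + (pd 0 u y ^ 2 + pd 1 u y ^ 2)) * pd 1 u y = 0 := by
    intro y hy
    have h := heq y (ball_subset_closedBall hy)
    simp only [TranslatorEq, Fin.sum_univ_two, hgr_fun] at h
    linear_combination h
  -- the equation at x
  have heqx : (1+((pd 0 u x)^2+(pd 1 u x)^2))*((pd 0 (pd 0 u) x)+(pd 1 (pd 1 u) x))
      - ((pd 0 u x)*(pd 0 u x)*(pd 0 (pd 0 u) x) + 2*((pd 0 u x)*(pd 1 u x)*(pd 0 (pd 1 u) x)) + (pd 1 u x)*(pd 1 u x)*(pd 1 (pd 1 u) x)) + (1+((pd 0 u x)^2+(pd 1 u x)^2))*(pd 1 u x) = 0 := by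
    have h := hTE x hx
    rw [hq10] at h
    linear_combination h
  -- differentiated equation
  have hdE : ∀ m : Fin 2, pd m (fun y =>
      (1 + (pd 0 u y ^ 2 + pd 1 u y ^ 2)) * (pd 0 (pd 0 u) y + pd 1 (pd 1 u) y)
        - (pd 0 u y * pd 0 u y * pd 0 (pd 0 u) y + pd 0 u y * pd 1 u y * pd 0 (pd 1 u) y
            + pd 1 u y * pd 0 u y * pd 1 (pd 0 u) y + pd 1 u y * pd 1 u y * pd 1 (pd 1 u) y)
        + (1 + (pd 0 u y ^ 2 + pd 1 u y ^ 2)) * pd 1 u y) x = 0 := by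
    intro m
    have hev : (fun y =>
        (1 + (pd 0 u y ^ 2 + pd 1 u y ^ 2)) * (pd 0 (pd 0 u) y + pd 1 (pd 1 u) y)
          - (pd 0 u y * pd 0 u y * pd 0 (pd 0 u) y + pd 0 u y * pd 1 u y * pd 0 (pd 1 u) y
              + pd 1 u y * pd 0 u y * pd 1 (pd 0 u) y + pd 1 u y * pd 1 u y * pd 1 (pd 1 u) y)
          + (1 + (pd 0 u y ^ 2 + pd 1 u y ^ 2)) * pd 1 u y)
        =ᶠ[nhds x] (fun _ => (0:ℝ)) :=
      Filter.eventuallyEq_of_mem (hso.mem_nhds hx) hTE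
    rw [pd_congr hev m, pd_const]
  have hdEx : ∀ m : Fin 2,
      (2 * pd m (pd 0 u) x * pd 0 u x + 2 * pd m (pd 1 u) x * pd 1 u x)
          * (pd 0 (pd 0 u) x + pd 1 (pd 1 u) x)
        + (1 + (pd 0 u x ^ 2 + pd 1 u x ^ 2)) * (pd m (pd 0 (pd 0 u)) x + pd m (pd 1 (pd 1 u)) x)
        - ((pd m (pd 0 u) x * pd 0 u x + pd 0 u x * pd m (pd 0 u) x) * pd 0 (pd 0 u) x
            + pd 0 u x * pd 0 u x * pd m (pd 0 (pd 0 u)) x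
            + (pd m (pd 0 u) x * pd 1 u x + pd 0 u x * pd m (pd 1 u) x) * pd 0 (pd 1 u) x
            + pd 0 u x * pd 1 u x * pd m (pd 0 (pd 1 u)) x
            + (pd m (pd 1 u) x * pd 0 u x + pd 1 u x * pd m (pd 0 u) x) * pd 1 (pd 0 u) x
            + pd 1 u x * pd 0 u x * pd m (pd 1 (pd 0 u)) x
            + (pd m (pd 1 u) x * pd 1 u x + pd 1 u x * pd m (pd 1 u) x) * pd 1 (pd 1 u) x
            + pd 1 u x * pd 1 u x * pd m (pd 1 (pd 1 u)) x)
        + (2 * pd m (pd 0 u) x * pd 0 u x + 2 * pd m (pd 1 u) x * pd 1 u x) * pd 1 u x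
        + (1 + (pd 0 u x ^ 2 + pd 1 u x ^ 2)) * pd m (pd 1 u) x = 0 := by
    intro m
    have h := hdE m
    have h0 := dA _ (hu1 0) x hx; have h1 := dA _ (hu1 1) x hx
    have h2 := dA _ (hu2 0 0) x hx; have h3 := dA _ (hu2 0 1) x hx
    have h4 := dA _ (hu2 1 0) x hx; have h5 := dA _ (hu2 1 1) x hx
    simp (disch := fun_prop) only [pd_add, pd_sub, pd_mul, pd_sq, pd_const_add, pd_const] at h
    linear_combination h
  -- differentiated equations in canonical variables
  have hdeq0x : 2*((pd 0 u x)*(pd 0 (pd 0 u) x)+(pd 1 u x)*(pd 0 (pd 1 u) x))*((pd 0 (pd 0 u) x)+(pd 1 (pd 1 u) x)) + (1+((pd 0 u x)^2+(pd 1 u x)^2))*((pd 0 (pd 0 (pd 0 u)) x)+(pd 0 (pd 1 (pd 1 u)) x))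
      - (2*((pd 0 (pd 0 u) x)*((pd 0 u x)*(pd 0 (pd 0 u) x)+(pd 1 u x)*(pd 0 (pd 1 u) x)) + (pd 0 (pd 1 u) x)*((pd 0 u x)*(pd 0 (pd 1 u) x)+(pd 1 u x)*(pd 1 (pd 1 u) x)))
          + ((pd 0 u x)*(pd 0 u x)*(pd 0 (pd 0 (pd 0 u)) x) + 2*((pd 0 u x)*(pd 1 u x)*(pd 0 (pd 0 (pd 1 u)) x)) + (pd 1 u x)*(pd 1 u x)*(pd 0 (pd 1 (pd 1 u)) x)))
      + 2*((pd 0 u x)*(pd 0 (pd 0 u) x)+(pd 1 u x)*(pd 0 (pd 1 u) x))*(pd 1 u x) + (1+((pd 0 u x)^2+(pd 1 u x)^2))*(pd 0 (pd 1 u) x) = 0 := by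
    have h := hdEx 0
    rw [hq10, e010] at h
    linear_combination h
  have hdeq1x : 2*((pd 0 u x)*(pd 0 (pd 1 u) x)+(pd 1 u x)*(pd 1 (pd 1 u) x))*((pd 0 (pd 0 u) x)+(pd 1 (pd 1 u) x)) + (1+((pd 0 u x)^2+(pd 1 u x)^2))*((pd 0 (pd 0 (pd 1 u)) x)+(pd 1 (pd 1 (pd 1 u)) x))
      - (2*((pd 0 (pd 1 u) x)*((pd 0 u x)*(pd 0 (pd 0 u) x)+(pd 1 u x)*(pd 0 (pd 1 u) x)) + (pd 1 (pd 1 u) x)*((pd 0 u x)*(pd 0 (pd 1 u) x)+(pd 1 u x)*(pd 1 (pd 1 u) x)))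
          + ((pd 0 u x)*(pd 0 u x)*(pd 0 (pd 0 (pd 1 u)) x) + 2*((pd 0 u x)*(pd 1 u x)*(pd 0 (pd 1 (pd 1 u)) x)) + (pd 1 u x)*(pd 1 u x)*(pd 1 (pd 1 (pd 1 u)) x)))
      + 2*((pd 0 u x)*(pd 0 (pd 1 u) x)+(pd 1 u x)*(pd 1 (pd 1 u) x))*(pd 1 u x) + (1+((pd 0 u x)^2+(pd 1 u x)^2))*(pd 1 (pd 1 u) x) = 0 := by
    have h := hdEx 1
    rw [hq10, e100, e110, e101] at h
    linear_combination h
  -- bounds on φ and its derivatives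
  obtain ⟨hF0, hF1⟩ := hφ0 x hxc
  have hgpx : gradSq φ x = pd 0 φ x ^ 2 + pd 1 φ x ^ 2 := by
    simp [gradSq, Fin.sum_univ_two]
  have hfb : pd 0 φ x ^ 2 + pd 1 φ x ^ 2 ≤ 4 / R ^ 2 := by
    have h := hφ1 x hxc
    have hnn : (0:ℝ) ≤ pd 0 φ x ^ 2 + pd 1 φ x ^ 2 := by positivity
    have hs : Real.sqrt (gradSq φ x) ≤ 2 / R := by
      rw [le_div_iff₀ hR0]; linarith [h]
    have h2 : gradSq φ x ≤ (2/R)^2 := by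
      nlinarith [Real.sq_sqrt (by rw [hgpx]; positivity : (0:ℝ) ≤ gradSq φ x),
        Real.sqrt_nonneg (gradSq φ x), hs, div_nonneg (by norm_num : (0:ℝ) ≤ 2) hR0.le]
    rw [hgpx] at h2
    calc pd 0 φ x ^ 2 + pd 1 φ x ^ 2 ≤ (2/R)^2 := h2
      _ = 4 / R^2 := by ring
  have hhpx : hessSq φ x = pd 0 (pd 0 φ) x ^ 2 + 2 * pd 0 (pd 1 φ) x ^ 2
      + pd 1 (pd 1 φ) x ^ 2 := by
    simp only [hessSq, Fin.sum_univ_two]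
    rw [hgp10]; ring
  have hgb : pd 0 (pd 0 φ) x ^ 2 + 2 * pd 0 (pd 1 φ) x ^ 2 + pd 1 (pd 1 φ) x ^ 2
      ≤ 64 / R ^ 4 := by
    have h := hφ2 x hxc
    have hR2 : (0:ℝ) < R^2 := by positivity
    have hs : Real.sqrt (hessSq φ x) ≤ 8 / R^2 := by
      rw [le_div_iff₀ hR2]; linarith [h]
    have h2 : hessSq φ x ≤ (8/R^2)^2 := by
      nlinarith [Real.sq_sqrt (by rw [hhpx]; positivity : (0:ℝ) ≤ hessSq φ x),
        Real.sqrt_nonneg (hessSq φ x), hs, div_nonneg (by norm_num : (0:ℝ) ≤ 8) hR2.le]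
    rw [hhpx] at h2
    calc pd 0 (pd 0 φ) x ^ 2 + 2 * pd 0 (pd 1 φ) x ^ 2 + pd 1 (pd 1 φ) x ^ 2
        ≤ (8/R^2)^2 := h2
      _ = 64 / R^4 := by ring
  -- assemble L G
  have hLop : Lop u (fun y => φ y ^ 2 * (gradSq u y / 2) + 400 / R * (u y ^ 2 / 2)) x = (1 - (pd 0 u x)*(pd 0 u x)/(1+((pd 0 u x)^2+(pd 1 u x)^2))) *
        (2*(φ x)*(pd 0 φ x)*((pd 0 u x)*(pd 0 (pd 0 u) x)+(pd 1 u x)*(pd 0 (pd 1 u) x)) + (φ x)^2*((pd 0 (pd 0 u) x)*(pd 0 (pd 0 u) x) + (pd 0 (pd 1 u) x)*(pd 0 (pd 1 u) x) + (pd 0 u x)*(pd 0 (pd 0 (pd 0 u)) x) + (pd 1 u x)*(pd 0 (pd 0 (pd 1 u)) x))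
          + ((pd 0 φ x)*(pd 0 φ x) + (φ x)*(pd 0 (pd 0 φ) x))*((pd 0 u x)^2+(pd 1 u x)^2) + 2*(φ x)*(pd 0 φ x)*((pd 0 u x)*(pd 0 (pd 0 u) x)+(pd 1 u x)*(pd 0 (pd 1 u) x))
          + (400/R)*((pd 0 u x)*(pd 0 u x) + (u x)*(pd 0 (pd 0 u) x)))
      + 2*((0 - (pd 0 u x)*(pd 1 u x)/(1+((pd 0 u x)^2+(pd 1 u x)^2))) *
        (2*(φ x)*(pd 0 φ x)*((pd 0 u x)*(pd 0 (pd 1 u) x)+(pd 1 u x)*(pd 1 (pd 1 u) x)) + (φ x)^2*((pd 0 (pd 1 u) x)*(pd 0 (pd 0 u) x) + (pd 1 (pd 1 u) x)*(pd 0 (pd 1 u) x) + (pd 0 u x)*(pd 0 (pd 0 (pd 1 u)) x) + (pd 1 u x)*(pd 0 (pd 1 (pd 1 u)) x))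
          + ((pd 0 φ x)*(pd 1 φ x) + (φ x)*(pd 0 (pd 1 φ) x))*((pd 0 u x)^2+(pd 1 u x)^2) + 2*(φ x)*(pd 1 φ x)*((pd 0 u x)*(pd 0 (pd 0 u) x)+(pd 1 u x)*(pd 0 (pd 1 u) x))
          + (400/R)*((pd 0 u x)*(pd 1 u x) + (u x)*(pd 0 (pd 1 u) x))))
      + (1 - (pd 1 u x)*(pd 1 u x)/(1+((pd 0 u x)^2+(pd 1 u x)^2))) *
        (2*(φ x)*(pd 1 φ x)*((pd 0 u x)*(pd 0 (pd 1 u) x)+(pd 1 u x)*(pd 1 (pd 1 u) x)) + (φ x)^2*((pd 0 (pd 1 u) x)*(pd 0 (pd 1 u) x) + (pd 1 (pd 1 u) x)*(pd 1 (pd 1 u) x) + (pd 0 u x)*(pd 0 (pd 1 (pd 1 u)) x) + (pd 1 u x)*(pd 1 (pd 1 (pd 1 u)) x))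
          + ((pd 1 φ x)*(pd 1 φ x) + (φ x)*(pd 1 (pd 1 φ) x))*((pd 0 u x)^2+(pd 1 u x)^2) + 2*(φ x)*(pd 1 φ x)*((pd 0 u x)*(pd 0 (pd 1 u) x)+(pd 1 u x)*(pd 1 (pd 1 u) x))
          + (400/R)*((pd 1 u x)*(pd 1 u x) + (u x)*(pd 1 (pd 1 u) x)))
      + ((φ x)^2*((pd 0 u x)*(pd 0 (pd 1 u) x) + (pd 1 u x)*(pd 1 (pd 1 u) x)) + (φ x)*(pd 1 φ x)*((pd 0 u x)^2+(pd 1 u x)^2) + (400/R)*((u x)*(pd 1 u x))) := by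
    simp only [Lop, acoef, Fin.sum_univ_two]
    norm_num
    rw [dG2 0 0, dG2 0 1, dG2 1 0, dG2 1 1, dG1 1 x hx, hgx]
    rw [hq10, hgp10, e010, e100, e110, e101]
    ring
  have hkey := key_ineq R (u x) (pd 0 u x) (pd 1 u x) (pd 0 (pd 0 u) x) (pd 0 (pd 1 u) x)
    (pd 1 (pd 1 u) x) (pd 0 (pd 0 (pd 0 u)) x) (pd 0 (pd 0 (pd 1 u)) x)
    (pd 0 (pd 1 (pd 1 u)) x) (pd 1 (pd 1 (pd 1 u)) x) (φ x) (pd 0 φ x) (pd 1 φ x)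
    (pd 0 (pd 0 φ) x) (pd 0 (pd 1 φ) x) (pd 1 (pd 1 φ) x)
    (Lop u (fun y => φ y ^ 2 * (gradSq u y / 2) + 400 / R * (u y ^ 2 / 2)) x)
    hR hF0 hF1 hfb hgb heqx hdeq0x hdeq1x hLop
  have hhx : hessSq u x = ((pd 0 (pd 0 u) x)^2+(pd 0 (pd 1 u) x)^2)
      + ((pd 0 (pd 1 u) x)^2+(pd 1 (pd 1 u) x)^2) := by
    simp only [hessSq, Fin.sum_univ_two]
    rw [hq10]; try ring
  rw [hgx, hhx]
  exact hkey

end
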